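/- arXiv:0901.4628 — 2 statements merged into one kernel-verified Lean document; each statement's English description precedes it below -/
import Mathlib

section
/- As n → ∞, s_n^{−2} Σ_{i=1}^n Z_i² converges to 1 in probability; that is, for every ε > 0, P(| s_n^{−2} Σ_{i=1}^n Z_i² − 1 | ≥ ε) → 0. -/
open MeasureTheory ProbabilityTheory Filter
open scoped Classical Topology

/- Cut off each `Z i` at `t = δ s_n`: `Z i ^ 2 = truncatedSq t (Z i) + Z i ^ 2 𝟙{t ≤ |Z i|}`.
The tail parts have total mean `s_n²` times the Lindeberg ratio, so Markov's inequality controls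
them; the truncated parts are independent, bounded by `t²`, so the variance of their normalised
sum is at most `t² s_n² / s_n⁴ = δ²` and Chebyshev's inequality controls it. Letting first
`n → ∞` and then `δ → 0` gives the claim. -/

lemma tendsto_nhds_zero_of_le_add {α : Type*} {l : Filter α} {p : α → ℝ} {q : ℝ → α → ℝ}
    {c : ℝ → ℝ} (hp : ∀ a, 0 ≤ p a) (hq : ∀ δ > 0, Tendsto (q δ) l (𝓝 0))
    (hc : Tendsto c (𝓝[>] 0) (𝓝 0)) (hpq : ∀ δ > 0, ∀ᶠ a in l, p a ≤ q δ a + c δ) :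
    Tendsto p l (𝓝 0) := by
  refine tendsto_order.2 ⟨fun b hb => Eventually.of_forall fun a => hb.trans_le (hp a),
    fun η hη => ?_⟩
  obtain ⟨δ, hcδ, hδ⟩ :=
    ((hc.eventually (gt_mem_nhds (half_pos hη))).and self_mem_nhdsWithin).exists
  filter_upwards [hpq δ hδ, (hq δ hδ).eventually (gt_mem_nhds (half_pos hη))] with a hpa hqa
  linarith

section Truncation

noncomputable def truncatedSq (t x : ℝ) : ℝ := if t ≤ |x| then 0 else x ^ 2

variable {t : ℝ}

lemma truncatedSq_nonneg (x : ℝ) : 0 ≤ truncatedSq t x := by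
  unfold truncatedSq; split_ifs <;> positivity

lemma truncatedSq_le_sq (x : ℝ) : truncatedSq t x ≤ t ^ 2 := by
  unfold truncatedSq
  split_ifs with h
  · positivity
  · rw [← sq_abs x]
    exact pow_le_pow_left₀ (abs_nonneg x) (not_le.1 h).le 2

lemma measurable_truncatedSq : Measurable (truncatedSq t) :=
  Measurable.ite (measurableSet_le measurable_const measurable_abs) measurable_const
    (measurable_id.pow_const 2)

lemma truncatedSq_add_indicator {Ω : Type*} (X : Ω → ℝ) (ω : Ω) :
    truncatedSq t (X ω) + {ω | t ≤ |X ω|}.indicator (fun ω => X ω ^ 2) ω = X ω ^ 2 := by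
  simp only [truncatedSq, Set.indicator_apply, Set.mem_ofPred_eq]
  split_ifs <;> ring

end Truncation

section Probability

variable {Ω : Type*} [MeasurableSpace Ω] {μ : Measure Ω}

lemma variance_le_mul_integral [IsProbabilityMeasure μ] {Y : Ω → ℝ} {c : ℝ}
    (hY : AEStronglyMeasurable Y μ) (hY0 : 0 ≤ᵐ[μ] Y) (hYc : ∀ᵐ ω ∂μ, Y ω ≤ c) :
    variance Y μ ≤ c * μ[Y] := by
  have hbound : ∀ᵐ ω ∂μ, ‖Y ω‖ ≤ c := by
    filter_upwards [hY0, hYc] with ω h0 hc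
    rwa [Real.norm_eq_abs, abs_of_nonneg h0]
  calc variance Y μ ≤ μ[Y ^ 2] := variance_le_expectation_sq hY
    _ ≤ μ[fun ω => c * Y ω] := by
        refine integral_mono_ae (MemLp.of_bound hY c hbound).integrable_sq
          ((Integrable.of_bound hY c hbound).const_mul c) ?_
        filter_upwards [hY0, hYc] with ω h0 hc
        simpa [sq] using mul_le_mul_of_nonneg_right hc h0
    _ = c * μ[Y] := integral_const_mul c Y

lemma memLp_truncatedSq_comp [IsFiniteMeasure μ] {X : Ω → ℝ} (hX : AEMeasurable X μ) (t : ℝ)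
    (p : ENNReal) : MemLp (fun ω => truncatedSq t (X ω)) p μ :=
  MemLp.of_bound (measurable_truncatedSq.comp_aemeasurable hX).aestronglyMeasurable (t ^ 2)
    (Eventually.of_forall fun ω => by
      rw [Real.norm_eq_abs, abs_of_nonneg (truncatedSq_nonneg _)]
      exact truncatedSq_le_sq _)

lemma integral_truncatedSq_add_setIntegral [IsFiniteMeasure μ] {X : Ω → ℝ} (hX : MemLp X 2 μ)
    (t : ℝ) :
    μ[fun ω => truncatedSq t (X ω)] + ∫ ω in {ω | t ≤ |X ω|}, X ω ^ 2 ∂μ = μ[fun ω => X ω ^ 2] := by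
  have hS : NullMeasurableSet {ω | t ≤ |X ω|} μ :=
    nullMeasurableSet_le aemeasurable_const hX.aestronglyMeasurable.aemeasurable.abs
  rw [← integral_indicator₀ hS, ← integral_add
    ((memLp_truncatedSq_comp hX.aestronglyMeasurable.aemeasurable t 1).integrable le_rfl)
    (hX.integrable_sq.indicator₀ hS)]
  exact integral_congr_ae (Eventually.of_forall (truncatedSq_add_indicator X))

lemma integral_truncatedSq_le [IsFiniteMeasure μ] {X : Ω → ℝ} (hX : MemLp X 2 μ) (t : ℝ) :
    μ[fun ω => truncatedSq t (X ω)] ≤ μ[fun ω => X ω ^ 2] := by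
  rw [← integral_truncatedSq_add_setIntegral hX t]
  exact le_add_of_nonneg_right (integral_nonneg fun ω => sq_nonneg (X ω))

lemma variance_sum_truncatedSq_le [IsProbabilityMeasure μ] {ι : Type*} {Z : ι → Ω → ℝ}
    (hindep : iIndepFun Z μ) (hZ : ∀ i, AEMeasurable (Z i) μ) (I : Finset ι) (t : ℝ) :
    variance (∑ i ∈ I, fun ω => truncatedSq t (Z i ω)) μ
      ≤ t ^ 2 * ∑ i ∈ I, μ[fun ω => truncatedSq t (Z i ω)] := by
  rw [IndepFun.variance_sum (fun i _ => memLp_truncatedSq_comp (hZ i) t 2)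
    (fun i _ j _ hij => (hindep.comp (fun _ => truncatedSq t)
      (fun _ => measurable_truncatedSq)).indepFun hij), Finset.mul_sum]
  exact Finset.sum_le_sum fun i _ => variance_le_mul_integral
    (measurable_truncatedSq.comp_aemeasurable (hZ i)).aestronglyMeasurable
    (Eventually.of_forall fun _ => truncatedSq_nonneg _)
    (Eventually.of_forall fun _ => truncatedSq_le_sq _)

/- Markov at level `ε / 4` for `G`, Chebyshev at level `ε / 2` for `X`; the mean of `G` takes up
the remaining `ε / 4`. -/
lemma measureReal_abs_add_sub_integral_ge_le [IsFiniteMeasure μ] {G X : Ω → ℝ} (hG0 : 0 ≤ G)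
    (hG : Integrable G μ) (hX : MemLp X 2 μ) {ε : ℝ} (hε : 0 < ε) (hGε : μ[G] ≤ ε / 4) :
    μ.real {ω | ε ≤ |G ω + X ω - (μ[G] + μ[X])|} ≤ 4 / ε * μ[G] + 4 * variance X μ / ε ^ 2 := by
  have hsub : {ω | ε ≤ |G ω + X ω - (μ[G] + μ[X])|}
      ⊆ {ω | ε / 4 ≤ G ω} ∪ {ω | ε / 2 ≤ |X ω - μ[X]|} := by
    intro ω hω
    by_contra hcon
    simp only [Set.mem_union, Set.mem_ofPred_eq, not_or, not_le] at hω hcon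
    have hEG : 0 ≤ μ[G] := integral_nonneg hG0
    have hGω : 0 ≤ G ω := hG0 ω
    have := abs_sub_lt_iff.1 hcon.2
    exact hω.not_gt (abs_sub_lt_iff.2 ⟨by linarith, by linarith⟩)
  have hMarkov : μ.real {ω | ε / 4 ≤ G ω} ≤ 4 / ε * μ[G] := by
    have := mul_meas_ge_le_integral_of_nonneg (Eventually.of_forall hG0) hG (ε / 4)
    rw [div_mul_eq_mul_div, le_div_iff₀ hε]
    linarith
  have hCheb : μ.real {ω | ε / 2 ≤ |X ω - μ[X]|} ≤ 4 * variance X μ / ε ^ 2 := by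
    refine ENNReal.toReal_le_of_le_ofReal
      (div_nonneg (mul_nonneg zero_le_four (variance_nonneg X μ)) (sq_nonneg ε)) ?_
    convert meas_ge_le_variance_div_sq hX (half_pos hε) using 2
    ring
  calc μ.real {ω | ε ≤ |G ω + X ω - (μ[G] + μ[X])|}
      ≤ μ.real ({ω | ε / 4 ≤ G ω} ∪ {ω | ε / 2 ≤ |X ω - μ[X]|}) := measureReal_mono hsub
    _ ≤ _ := (measureReal_union_le _ _).trans (add_le_add hMarkov hCheb)

variable {ι : Type*}

noncomputable def lindebergRatio (μ : Measure Ω) (Z : ι → Ω → ℝ) (σ2 : ι → ℝ) (I : Finset ι)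
    (δ : ℝ) : ℝ :=
  (∑ i ∈ I, σ2 i)⁻¹ *
    ∑ i ∈ I, ∫ ω in {ω | δ * Real.sqrt (∑ j ∈ I, σ2 j) ≤ |Z i ω|}, (Z i ω) ^ 2 ∂μ

lemma variance_inv_smul_sum_truncatedSq_le [IsProbabilityMeasure μ] {Z : ι → Ω → ℝ}
    {σ2 : ι → ℝ} (hindep : iIndepFun Z μ) (hL2 : ∀ i, MemLp (Z i) 2 μ)
    (hvar : ∀ i, ∫ ω, (Z i ω) ^ 2 ∂μ = σ2 i) {I : Finset ι} (hs : 0 < ∑ i ∈ I, σ2 i) (δ : ℝ) :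
    variance ((∑ i ∈ I, σ2 i)⁻¹ •
      ∑ i ∈ I, fun ω => truncatedSq (δ * Real.sqrt (∑ j ∈ I, σ2 j)) (Z i ω)) μ ≤ δ ^ 2 := by
  set s := ∑ i ∈ I, σ2 i
  set t := δ * Real.sqrt s
  calc _ = (s⁻¹) ^ 2 * variance (∑ i ∈ I, fun ω => truncatedSq t (Z i ω)) μ :=
        variance_smul _ _ _
    _ ≤ (s⁻¹) ^ 2 * (t ^ 2 * s) := by
        gcongr
        refine (variance_sum_truncatedSq_le hindep
          (fun i => (hL2 i).aestronglyMeasurable.aemeasurable) I t).trans ?_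
        gcongr
        exact Finset.sum_le_sum fun i _ => (integral_truncatedSq_le (hL2 i) t).trans_eq (hvar i)
    _ = δ ^ 2 := by
        rw [mul_pow, Real.sq_sqrt hs.le]
        field_simp

lemma measureReal_abs_inv_mul_sum_sq_sub_one_ge_le [IsProbabilityMeasure μ] {Z : ι → Ω → ℝ}
    {σ2 : ι → ℝ} (hindep : iIndepFun Z μ) (hL2 : ∀ i, MemLp (Z i) 2 μ)
    (hvar : ∀ i, ∫ ω, (Z i ω) ^ 2 ∂μ = σ2 i) {I : Finset ι} (hs : 0 < ∑ i ∈ I, σ2 i)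
    {ε δ : ℝ} (hε : 0 < ε) (hL : lindebergRatio μ Z σ2 I δ ≤ ε / 4) :
    μ.real {ω | ε ≤ |(∑ i ∈ I, σ2 i)⁻¹ * ∑ i ∈ I, (Z i ω) ^ 2 - 1|}
      ≤ 4 / ε * lindebergRatio μ Z σ2 I δ + 4 * δ ^ 2 / ε ^ 2 := by
  set s := ∑ i ∈ I, σ2 i
  set t := δ * Real.sqrt s
  set A : ι → Ω → ℝ := fun i => {ω | t ≤ |Z i ω|}.indicator fun ω => Z i ω ^ 2
  set G : Ω → ℝ := s⁻¹ • ∑ i ∈ I, A i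
  set X : Ω → ℝ := s⁻¹ • ∑ i ∈ I, fun ω => truncatedSq t (Z i ω)
  have hZ i : AEMeasurable (Z i) μ := (hL2 i).aestronglyMeasurable.aemeasurable
  have hS i : NullMeasurableSet {ω | t ≤ |Z i ω|} μ :=
    nullMeasurableSet_le aemeasurable_const (hZ i).abs
  have hA i : Integrable (A i) μ := (hL2 i).integrable_sq.indicator₀ (hS i)
  have hEA i : μ[A i] = ∫ ω in {ω | t ≤ |Z i ω|}, Z i ω ^ 2 ∂μ := integral_indicator₀ (hS i)
  have hEG : μ[G] = lindebergRatio μ Z σ2 I δ := by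
    simp only [G, Pi.smul_apply, Finset.sum_apply, smul_eq_mul, integral_const_mul,
      integral_finsetSum I fun i _ => hA i, hEA, lindebergRatio, s, t]
  have hmean : μ[G] + μ[X] = 1 := by
    simp only [G, X, Pi.smul_apply, Finset.sum_apply, smul_eq_mul, integral_const_mul,
      integral_finsetSum I fun i _ => hA i, hEA,
      integral_finsetSum I fun i _ => (memLp_truncatedSq_comp (hZ i) t 1).integrable le_rfl]
    rw [← mul_add, ← Finset.sum_add_distrib, Finset.sum_congr rfl fun i _ =>
      (add_comm _ _).trans ((integral_truncatedSq_add_setIntegral (hL2 i) t).trans (hvar i))]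
    exact inv_mul_cancel₀ hs.ne'
  have hG0 : 0 ≤ G := fun ω => by
    simp only [G, Pi.smul_apply, Finset.sum_apply, smul_eq_mul, Pi.zero_apply]
    exact mul_nonneg (inv_nonneg.2 hs.le) (Finset.sum_nonneg fun i _ =>
      Set.indicator_nonneg (fun ω _ => sq_nonneg (Z i ω)) ω)
  have hGX ω : G ω + X ω = s⁻¹ * ∑ i ∈ I, Z i ω ^ 2 := by
    simp only [G, X, Pi.smul_apply, Finset.sum_apply, smul_eq_mul, ← mul_add,
      ← Finset.sum_add_distrib]
    exact congrArg _ (Finset.sum_congr rfl fun i _ =>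
      (add_comm _ _).trans (truncatedSq_add_indicator (Z i) ω))
  calc μ.real {ω | ε ≤ |s⁻¹ * ∑ i ∈ I, (Z i ω) ^ 2 - 1|}
      = μ.real {ω | ε ≤ |G ω + X ω - (μ[G] + μ[X])|} := by simp only [hGX, hmean]
    _ ≤ 4 / ε * μ[G] + 4 * variance X μ / ε ^ 2 :=
        measureReal_abs_add_sub_integral_ge_le hG0
          ((integrable_finsetSum' I fun i _ => hA i).smul s⁻¹)
          ((memLp_finsetSum' I fun i _ => memLp_truncatedSq_comp (hZ i) t 2).const_smul s⁻¹)
          hε (hEG ▸ hL)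
    _ ≤ _ := by
        rw [hEG]
        gcongr
        exact variance_inv_smul_sum_truncatedSq_le hindep hL2 hvar hs δ

end Probability

theorem raikov_sum_of_squares_general
    {Ω : Type*} [MeasurableSpace Ω] (P : Measure Ω) [IsProbabilityMeasure P]
    (Z : ℕ → Ω → ℝ) (σ2 : ℕ → ℝ)
    (hindep : iIndepFun Z P)
    (hL2 : ∀ i, MemLp (Z i) 2 P)
    (hvar : ∀ i, ∫ ω, (Z i ω) ^ 2 ∂P = σ2 i)
    (hpos : ∀ i, 0 < σ2 i)
    (hLind : ∀ ε > (0 : ℝ), Tendsto (fun n =>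
      (∑ i ∈ Finset.range n, σ2 i)⁻¹ *
        ∑ i ∈ Finset.range n,
          ∫ ω in {ω | ε * Real.sqrt (∑ j ∈ Finset.range n, σ2 j) ≤ |Z i ω|}, (Z i ω) ^ 2 ∂P)
      atTop (nhds 0)) :
    ∀ ε > (0 : ℝ), Tendsto (fun n =>
      P {ω | ε ≤ |(∑ i ∈ Finset.range n, σ2 i)⁻¹ * ∑ i ∈ Finset.range n, (Z i ω) ^ 2 - 1|})
      atTop (nhds 0) := by
  intro ε hε
  have hLind' : ∀ δ > 0, Tendsto (fun n => lindebergRatio P Z σ2 (Finset.range n) δ) atTop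
      (𝓝 0) := hLind
  rw [← ENNReal.tendsto_toReal_zero_iff]
  have hc : Tendsto (fun δ : ℝ => 4 * δ ^ 2 / ε ^ 2) (𝓝[>] 0) (𝓝 0) := by
    refine tendsto_nhdsWithin_of_tendsto_nhds ?_
    simpa using ((continuous_const.mul (continuous_pow 2)).div_const (ε ^ 2)).tendsto (0 : ℝ)
  refine tendsto_nhds_zero_of_le_add (fun _ => ENNReal.toReal_nonneg)
    (q := fun δ n => 4 / ε * lindebergRatio P Z σ2 (Finset.range n) δ) ?_ hc ?_
  · intro δ hδ
    simpa only [mul_zero] using (hLind' δ hδ).const_mul (4 / ε)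
  · intro δ hδ
    have hε4 : (0 : ℝ) < ε / 4 := by positivity
    filter_upwards [eventually_ge_atTop 1, (hLind' δ hδ).eventually (eventually_le_nhds hε4)]
      with n hn hL
    exact measureReal_abs_inv_mul_sum_sq_sub_one_ge_le hindep hL2 hvar
      (Finset.sum_pos (fun i _ => hpos i) (Finset.nonempty_range_iff.2 (by omega))) hε hL

/-- Lemma 3 (Raikov-type theorem): under Lindeberg's condition,
`s_n^{-2} ∑_{i=1}^n Z_i²` converges to `1` in probability. -/
theorem raikov_sum_of_squares
    {Ω : Type*} [MeasurableSpace Ω] (P : Measure Ω) [IsProbabilityMeasure P]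
    (Z : ℕ → Ω → ℝ) (σ2 : ℕ → ℝ)
    (hmeas : ∀ i, Measurable (Z i))
    (hindep : iIndepFun Z P)
    (hL2 : ∀ i, MemLp (Z i) 2 P)
    (hmean : ∀ i, ∫ ω, Z i ω ∂P = 0)
    (hvar : ∀ i, ∫ ω, (Z i ω) ^ 2 ∂P = σ2 i)
    (hpos : ∀ i, 0 < σ2 i)
    (hLind : ∀ ε > (0 : ℝ), Tendsto (fun n =>
      (∑ i ∈ Finset.range n, σ2 i)⁻¹ *
        ∑ i ∈ Finset.range n,
          ∫ ω in {ω | ε * Real.sqrt (∑ j ∈ Finset.range n, σ2 j) ≤ |Z i ω|}, (Z i ω) ^ 2 ∂P)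
      atTop (nhds 0)) :
    ∀ ε > (0 : ℝ), Tendsto (fun n =>
      P {ω | ε ≤ |(∑ i ∈ Finset.range n, σ2 i)⁻¹ * ∑ i ∈ Finset.range n, (Z i ω) ^ 2 - 1|})
      atTop (nhds 0) :=
  raikov_sum_of_squares_general P Z σ2 hindep hL2 hvar hpos hLind
end

section
/- As n → ∞, max_{1 ≤ i ≤ n} (Z_i − Z̄_n)² / Σ_{i=1}^n (Z_i − Z̄_n)² converges to 0 in probability; that is, for every ε > 0, P( max_{1 ≤ i ≤ n} (Z_i − Z̄_n)² / Σ_{i=1}^n (Z_i − Z̄_n)² ≥ ε ) → 0, where Z̄_n := n^{−1} Σ_{i=1}^n Z_i. -/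
/-!
Let `s = s_n`, `S = ∑ Z_i` and `D = ∑ (Z_i - S/n)² = ∑ Z_i² - S²/n`. Fix a small `δ`. Outside the
three events
* some `Z_i² ≥ δ s` (Markov and a union bound: probability at most `δ⁻¹` times the Lindeberg sum),
* `S²/n ≥ δ s` (Chebyshev: probability at most `1/(δ n)`),
* `∑ Z_i² ≤ (3/4) s` (the squares truncated at `c √s` have mean `s` minus a Lindeberg sum and
  variance at most `c² s²`, so Chebyshev bounds the probability by `O(c²)` with `c` arbitrary),

we have `D > s/2` and `(Z_i - S/n)² ≤ 2 Z_i² + 2 (S/n)² < 4 δ s`, so every ratio is below `8 δ`.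
-/

open MeasureTheory ProbabilityTheory Filter Finset
open scoped ENNReal Topology

section Limits

variable {α : Type*} {l : Filter α} {f : α → ℝ≥0∞}

theorem ENNReal.tendsto_nhds_zero_of_forall_le_ofReal
    (h : ∀ η > (0 : ℝ), ∀ᶠ a in l, f a ≤ ENNReal.ofReal η) : Tendsto f l (𝓝 0) := by
  refine ENNReal.tendsto_nhds_zero.2 fun ε hε => ?_
  rcases eq_or_ne ε ⊤ with rfl | hε_top
  · exact .of_forall fun _ => le_top
  · filter_upwards [h ε.toReal (ENNReal.toReal_pos hε.ne' hε_top)] with a ha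
    rwa [ENNReal.ofReal_toReal hε_top] at ha

theorem ENNReal.tendsto_nhds_zero_of_le_ofReal {g : α → ℝ}
    (hg : Tendsto g l (𝓝 0)) (h : ∀ᶠ a in l, f a ≤ ENNReal.ofReal (g a)) :
    Tendsto f l (𝓝 0) :=
  tendsto_of_tendsto_of_tendsto_of_le_of_le' tendsto_const_nhds
    (by simpa using ENNReal.tendsto_ofReal hg) (.of_forall fun _ => zero_le) h

end Limits

section Truncation

noncomputable def truncSq (t x : ℝ) : ℝ := if |x| < t then x ^ 2 else 0

variable {t x : ℝ}

theorem truncSq_nonneg : 0 ≤ truncSq t x := by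
  unfold truncSq; split_ifs <;> positivity

theorem truncSq_le_sq : truncSq t x ≤ x ^ 2 := by
  unfold truncSq; split_ifs
  exacts [le_rfl, sq_nonneg x]

theorem truncSq_le : truncSq t x ≤ t ^ 2 := by
  unfold truncSq
  split_ifs with h
  · simpa only [sq_abs] using pow_le_pow_left₀ (abs_nonneg x) h.le 2
  · positivity

theorem sq_truncSq_le : truncSq t x ^ 2 ≤ t ^ 2 * x ^ 2 :=
  (sq (truncSq t x)).trans_le
    (mul_le_mul truncSq_le truncSq_le_sq truncSq_nonneg (sq_nonneg t))

theorem measurable_truncSq : Measurable (truncSq t) :=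
  Measurable.ite (measurableSet_lt measurable_abs measurable_const) (measurable_id.pow_const 2)
    measurable_const

theorem truncSq_eq_sq_sub_indicator :
    truncSq t x = x ^ 2 - {y | t ≤ |y|}.indicator (· ^ 2) x := by
  by_cases h : |x| < t
  · rw [truncSq, if_pos h, Set.indicator_of_notMem (by simpa using h), sub_zero]
  · rw [truncSq, if_neg h, Set.indicator_of_mem (by simpa using h), sub_self]

end Truncation

section Moments

variable {Ω ι : Type*} [MeasurableSpace Ω]

noncomputable def tailSqSum (μ : Measure Ω) (Z : ι → Ω → ℝ) (I : Finset ι) (t : ℝ) : ℝ :=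
  ∑ i ∈ I, ∫ ω in {ω | t ≤ |Z i ω|}, Z i ω ^ 2 ∂μ

variable {μ : Measure Ω} {Z : ι → Ω → ℝ}

theorem integral_truncSq_comp {X : Ω → ℝ} (hX : Measurable X)
    (hX2 : Integrable (fun ω => X ω ^ 2) μ) (t : ℝ) :
    ∫ ω, truncSq t (X ω) ∂μ = ∫ ω, X ω ^ 2 ∂μ - ∫ ω in {ω | t ≤ |X ω|}, X ω ^ 2 ∂μ := by
  have hS : MeasurableSet {ω | t ≤ |X ω|} := measurableSet_le measurable_const hX.abs
  simp_rw [truncSq_eq_sq_sub_indicator]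
  rw [← integral_indicator hS, ← integral_sub hX2 (hX2.indicator hS)]
  rfl

theorem measure_exists_le_abs_le [IsFiniteMeasure μ] (hmeas : ∀ i, Measurable (Z i))
    (hint : ∀ i, Integrable (fun ω => Z i ω ^ 2) μ) (I : Finset ι) {t : ℝ} (ht : 0 < t) :
    μ {ω | ∃ i ∈ I, t ≤ |Z i ω|} ≤ ENNReal.ofReal ((t ^ 2)⁻¹ * tailSqSum μ Z I t) := by
  have markov : ∀ i, μ {ω | t ≤ |Z i ω|} ≤
      ENNReal.ofReal ((t ^ 2)⁻¹ * ∫ ω in {ω | t ≤ |Z i ω|}, Z i ω ^ 2 ∂μ) := by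
    intro i
    have hS : MeasurableSet {ω | t ≤ |Z i ω|} := measurableSet_le measurable_const (hmeas i).abs
    have h := setIntegral_ge_of_const_le_real hS (measure_ne_top μ _)
      (fun ω (hω : t ≤ |Z i ω|) => by simpa using pow_le_pow_left₀ ht.le hω 2) (hint i).integrableOn
    rw [← ofReal_measureReal (measure_ne_top μ _)]
    exact ENNReal.ofReal_le_ofReal ((le_inv_mul_iff₀ (by positivity)).2 h)
  calc μ {ω | ∃ i ∈ I, t ≤ |Z i ω|} = μ (⋃ i ∈ I, {ω | t ≤ |Z i ω|}) := by congr 1; ext; simp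
    _ ≤ ∑ i ∈ I, μ {ω | t ≤ |Z i ω|} := measure_biUnion_finset_le _ _
    _ ≤ ∑ i ∈ I, ENNReal.ofReal ((t ^ 2)⁻¹ * ∫ ω in {ω | t ≤ |Z i ω|}, Z i ω ^ 2 ∂μ) :=
      sum_le_sum fun i _ => markov i
    _ = _ := by
      rw [tailSqSum, mul_sum, ENNReal.ofReal_sum_of_nonneg fun i _ =>
        mul_nonneg (by positivity) (integral_nonneg fun _ => sq_nonneg _)]

theorem measure_le_sq_sum_le [IsProbabilityMeasure μ] (hindep : iIndepFun Z μ)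
    (hL2 : ∀ i, MemLp (Z i) 2 μ) (hmean : ∀ i, ∫ ω, Z i ω ∂μ = 0) (I : Finset ι) {a : ℝ}
    (ha : 0 < a) :
    μ {ω | a ≤ (∑ i ∈ I, Z i ω) ^ 2} ≤ ENNReal.ofReal ((∑ i ∈ I, ∫ ω, Z i ω ^ 2 ∂μ) / a) := by
  have hS : MemLp (∑ i ∈ I, Z i) 2 μ := memLp_finsetSum' _ fun i _ => hL2 i
  have hmeanS : ∫ ω, (∑ i ∈ I, Z i) ω ∂μ = 0 := by
    simp only [Finset.sum_apply]
    rw [integral_finsetSum _ fun i _ => (hL2 i).integrable one_le_two]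
    simp [hmean]
  have hvarS : Var[∑ i ∈ I, Z i; μ] = ∑ i ∈ I, ∫ ω, Z i ω ^ 2 ∂μ := by
    rw [IndepFun.variance_sum (fun i _ => hL2 i) fun i _ j _ hij => hindep.indepFun hij]
    exact sum_congr rfl fun i _ =>
      variance_of_integral_eq_zero (hL2 i).aestronglyMeasurable.aemeasurable (hmean i)
  calc μ {ω | a ≤ (∑ i ∈ I, Z i ω) ^ 2}
      = μ {ω | √a ≤ |(∑ i ∈ I, Z i) ω - ∫ ω, (∑ i ∈ I, Z i) ω ∂μ|} := by
        rw [hmeanS]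
        simp only [sub_zero, Finset.sum_apply, ← Real.sqrt_sq_eq_abs,
          Real.sqrt_le_sqrt_iff (sq_nonneg _)]
    _ ≤ ENNReal.ofReal (Var[∑ i ∈ I, Z i; μ] / √a ^ 2) :=
        meas_ge_le_variance_div_sq hS (Real.sqrt_pos.2 ha)
    _ = _ := by rw [hvarS, Real.sq_sqrt ha.le]

theorem measure_sum_sq_le_sub_le [IsProbabilityMeasure μ] (hmeas : ∀ i, Measurable (Z i))
    (hindep : iIndepFun Z μ) (hL2 : ∀ i, MemLp (Z i) 2 μ) (I : Finset ι) (t : ℝ) {d : ℝ}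
    (hd : tailSqSum μ Z I t < d) :
    μ {ω | ∑ i ∈ I, Z i ω ^ 2 ≤ ∑ i ∈ I, ∫ ω, Z i ω ^ 2 ∂μ - d} ≤
      ENNReal.ofReal ((t ^ 2 * ∑ i ∈ I, ∫ ω, Z i ω ^ 2 ∂μ) / (d - tailSqSum μ Z I t) ^ 2) := by
  set Y : ι → Ω → ℝ := fun i ω => truncSq t (Z i ω)
  set T := ∑ i ∈ I, Y i
  have hYL2 : ∀ i, MemLp (Y i) 2 μ := fun i =>
    MemLp.of_bound (measurable_truncSq.comp (hmeas i)).aestronglyMeasurable (t ^ 2)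
      (.of_forall fun ω => by rw [Real.norm_of_nonneg truncSq_nonneg]; exact truncSq_le)
  have hET : ∫ ω, T ω ∂μ = ∑ i ∈ I, ∫ ω, Z i ω ^ 2 ∂μ - tailSqSum μ Z I t := by
    simp only [T, Finset.sum_apply]
    rw [integral_finsetSum _ fun i _ => (hYL2 i).integrable one_le_two, tailSqSum,
      ← sum_sub_distrib]
    exact sum_congr rfl fun i _ => integral_truncSq_comp (hmeas i) (hL2 i).integrable_sq t
  have hvarT : Var[T; μ] ≤ t ^ 2 * ∑ i ∈ I, ∫ ω, Z i ω ^ 2 ∂μ := by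
    rw [IndepFun.variance_sum (fun i _ => hYL2 i) fun i _ j _ hij =>
      (hindep.indepFun hij).comp measurable_truncSq measurable_truncSq, mul_sum]
    refine sum_le_sum fun i _ =>
      (variance_le_expectation_sq (hYL2 i).aestronglyMeasurable).trans ?_
    rw [← integral_const_mul]
    exact integral_mono (hYL2 i).integrable_sq ((hL2 i).integrable_sq.const_mul _)
      fun ω => sq_truncSq_le
  have hsub : {ω | ∑ i ∈ I, Z i ω ^ 2 ≤ ∑ i ∈ I, ∫ ω, Z i ω ^ 2 ∂μ - d} ⊆
      {ω | d - tailSqSum μ Z I t ≤ |T ω - ∫ ω, T ω ∂μ|} := by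
    intro ω hω
    replace hω : ∑ i ∈ I, Z i ω ^ 2 ≤ ∑ i ∈ I, ∫ ω, Z i ω ^ 2 ∂μ - d := hω
    have hTω : T ω ≤ ∑ i ∈ I, Z i ω ^ 2 := by
      simp only [T, Finset.sum_apply]
      exact sum_le_sum fun i _ => truncSq_le_sq
    show d - tailSqSum μ Z I t ≤ |T ω - ∫ ω, T ω ∂μ|
    rw [hET, abs_sub_comm]
    exact le_trans (by linarith) (le_abs_self _)
  calc _ ≤ _ := measure_mono hsub
    _ ≤ ENNReal.ofReal (Var[T; μ] / (d - tailSqSum μ Z I t) ^ 2) :=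
        meas_ge_le_variance_div_sq (memLp_finsetSum' _ fun i _ => hYL2 i) (sub_pos.2 hd)
    _ ≤ _ := ENNReal.ofReal_le_ofReal (div_le_div_of_nonneg_right hvarT (sq_nonneg _))

end Moments

section EmpiricalVariance

variable {ι : Type*} (z : ι → ℝ) (I : Finset ι)

theorem sum_sq_sub_mean_eq :
    ∑ i ∈ I, (z i - (∑ j ∈ I, z j) / #I) ^ 2 = ∑ i ∈ I, z i ^ 2 - (∑ j ∈ I, z j) ^ 2 / #I := by
  rcases I.eq_empty_or_nonempty with rfl | hI
  · simp
  have hN : (#I : ℝ) ≠ 0 := by exact_mod_cast hI.card_pos.ne'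
  simp_rw [sub_sq, sum_add_distrib, sum_sub_distrib, ← sum_mul, ← mul_sum, sum_const,
    nsmul_eq_mul]
  field_simp
  ring

variable {z I}

theorem sq_sub_mean_div_lt {s δ : ℝ} (hs : 0 < s) (hδ : δ ≤ 1 / 4)
    (hz : ∀ i ∈ I, z i ^ 2 < δ * s) (hsum : (∑ i ∈ I, z i) ^ 2 / #I < δ * s)
    (hsq : (1 - 1 / 4) * s < ∑ i ∈ I, z i ^ 2) {i : ι} (hi : i ∈ I) :
    (z i - (∑ j ∈ I, z j) / #I) ^ 2 / ∑ j ∈ I, (z j - (∑ l ∈ I, z l) / #I) ^ 2 < 8 * δ := by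
  have hdecomp := sum_sq_sub_mean_eq z I
  set S := ∑ j ∈ I, z j
  have hN : (1 : ℝ) ≤ #I := by exact_mod_cast card_pos.2 ⟨i, hi⟩
  have hδ_pos : 0 < δ := pos_of_mul_pos_left ((sq_nonneg (z i)).trans_lt (hz i hi)) hs.le
  have hmean : (S / #I) ^ 2 ≤ S ^ 2 / #I := by
    rw [div_pow]
    exact div_le_div_of_nonneg_left (sq_nonneg S) (by positivity) (le_self_pow₀ hN two_ne_zero)
  have hD : s / 2 < ∑ j ∈ I, (z j - S / #I) ^ 2 := by
    rw [hdecomp]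
    nlinarith
  have hnum : (z i - S / #I) ^ 2 < 4 * δ * s := by
    nlinarith [hz i hi, sq_nonneg (z i + S / #I)]
  rw [div_lt_iff₀ (by linarith)]
  nlinarith

end EmpiricalVariance

section Lindeberg

variable {Ω : Type*} [MeasurableSpace Ω]

def LindebergCondition (P : Measure Ω) (Z : ℕ → Ω → ℝ) (σ2 : ℕ → ℝ) : Prop :=
  ∀ ε > (0 : ℝ), Tendsto (fun n => (∑ i ∈ range n, σ2 i)⁻¹ *
    tailSqSum P Z (range n) (ε * √(∑ j ∈ range n, σ2 j))) atTop (𝓝 0)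

variable {P : Measure Ω} [IsProbabilityMeasure P] {Z : ℕ → Ω → ℝ} {σ2 : ℕ → ℝ}

theorem sum_range_pos (hpos : ∀ i, 0 < σ2 i) {n : ℕ} (hn : 0 < n) :
    0 < ∑ j ∈ range n, σ2 j :=
  sum_pos (fun i _ => hpos i) (nonempty_range_iff.2 hn.ne')

theorem tendsto_measure_exists_le_sq (hmeas : ∀ i, Measurable (Z i))
    (hL2 : ∀ i, MemLp (Z i) 2 P) (hpos : ∀ i, 0 < σ2 i) (hL : LindebergCondition P Z σ2)
    {δ : ℝ} (hδ : 0 < δ) :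
    Tendsto (fun n => P {ω | ∃ i ∈ range n, δ * ∑ j ∈ range n, σ2 j ≤ Z i ω ^ 2})
      atTop (𝓝 0) := by
  refine ENNReal.tendsto_nhds_zero_of_le_ofReal
    (by simpa using (hL √δ (Real.sqrt_pos.2 hδ)).div_const δ) ?_
  filter_upwards [eventually_gt_atTop 0] with n hn
  have hs := sum_range_pos hpos hn
  have hlevel : √δ * √(∑ j ∈ range n, σ2 j) = √(δ * ∑ j ∈ range n, σ2 j) :=
    (Real.sqrt_mul hδ.le _).symm
  calc P {ω | ∃ i ∈ range n, δ * ∑ j ∈ range n, σ2 j ≤ Z i ω ^ 2}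
      = P {ω | ∃ i ∈ range n, √δ * √(∑ j ∈ range n, σ2 j) ≤ |Z i ω|} := by
        simp only [hlevel, ← Real.sqrt_sq_eq_abs, Real.sqrt_le_sqrt_iff (sq_nonneg _)]
    _ ≤ _ := measure_exists_le_abs_le hmeas (fun i => (hL2 i).integrable_sq) _
        (by positivity)
    _ = _ := by
        rw [hlevel, Real.sq_sqrt (by positivity), mul_inv, div_eq_inv_mul]
        ring_nf

theorem tendsto_measure_le_sq_sum_div (hindep : iIndepFun Z P) (hL2 : ∀ i, MemLp (Z i) 2 P)
    (hmean : ∀ i, ∫ ω, Z i ω ∂P = 0) (hvar : ∀ i, ∫ ω, Z i ω ^ 2 ∂P = σ2 i)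
    (hpos : ∀ i, 0 < σ2 i) {δ : ℝ} (hδ : 0 < δ) :
    Tendsto (fun n : ℕ => P {ω | δ * ∑ j ∈ range n, σ2 j ≤ (∑ j ∈ range n, Z j ω) ^ 2 / n})
      atTop (𝓝 0) := by
  refine ENNReal.tendsto_nhds_zero_of_le_ofReal (g := fun n : ℕ => (δ * n)⁻¹)
    (tendsto_inv_atTop_zero.comp (tendsto_natCast_atTop_atTop.const_mul_atTop hδ)) ?_
  filter_upwards [eventually_gt_atTop 0] with n hn
  have hs := sum_range_pos hpos hn
  have hn' : (0 : ℝ) < n := Nat.cast_pos.2 hn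
  calc P {ω | δ * ∑ j ∈ range n, σ2 j ≤ (∑ j ∈ range n, Z j ω) ^ 2 / n}
      = P {ω | δ * (∑ j ∈ range n, σ2 j) * n ≤ (∑ j ∈ range n, Z j ω) ^ 2} := by
        simp_rw [le_div_iff₀ hn']
    _ ≤ _ := measure_le_sq_sum_le hindep hL2 hmean _ (by positivity)
    _ = _ := by
        simp_rw [hvar]
        congr 1
        field_simp

theorem tendsto_measure_sum_sq_le (hmeas : ∀ i, Measurable (Z i)) (hindep : iIndepFun Z P)
    (hL2 : ∀ i, MemLp (Z i) 2 P) (hvar : ∀ i, ∫ ω, Z i ω ^ 2 ∂P = σ2 i)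
    (hpos : ∀ i, 0 < σ2 i) (hL : LindebergCondition P Z σ2) {δ : ℝ} (hδ : 0 < δ) :
    Tendsto (fun n => P {ω | ∑ i ∈ range n, Z i ω ^ 2 ≤ (1 - δ) * ∑ j ∈ range n, σ2 j})
      atTop (𝓝 0) := by
  refine ENNReal.tendsto_nhds_zero_of_forall_le_ofReal fun η hη => ?_
  -- the truncation level `c √s` for which Chebyshev's bound `c² s² / (δ s / 2)²` equals `η`
  set c := δ * √η / 2
  have hc : c ^ 2 = η * (δ / 2) ^ 2 := by
    simp only [c, div_pow, mul_pow, Real.sq_sqrt hη.le]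
    ring
  filter_upwards [(hL c (by positivity)).eventually (eventually_le_nhds (half_pos hδ)),
    eventually_gt_atTop 0] with n hLn hn
  set s := ∑ j ∈ range n, σ2 j
  have hs : 0 < s := sum_range_pos hpos hn
  have htail : tailSqSum P Z (range n) (c * √s) ≤ δ / 2 * s := by
    rw [inv_mul_le_iff₀ hs] at hLn
    linarith
  have hsum : ∑ i ∈ range n, ∫ ω, Z i ω ^ 2 ∂P = s := sum_congr rfl fun i _ => hvar i
  calc P {ω | ∑ i ∈ range n, Z i ω ^ 2 ≤ (1 - δ) * s}
      = P {ω | ∑ i ∈ range n, Z i ω ^ 2 ≤ ∑ i ∈ range n, ∫ ω, Z i ω ^ 2 ∂P - δ * s} := by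
        rw [hsum, sub_mul, one_mul]
    _ ≤ _ := measure_sum_sq_le_sub_le hmeas hindep hL2 _ _ (by nlinarith)
    _ ≤ ENNReal.ofReal η := by
        refine ENNReal.ofReal_le_ofReal ?_
        have hgap : δ / 2 * s ≤ δ * s - tailSqSum P Z (range n) (c * √s) := by linarith
        have hgap_pos : 0 < δ * s - tailSqSum P Z (range n) (c * √s) :=
          (mul_pos (half_pos hδ) hs).trans_le hgap
        rw [hsum, mul_pow, Real.sq_sqrt hs.le, div_le_iff₀ (pow_pos hgap_pos 2), hc]
        calc η * (δ / 2) ^ 2 * s * s = η * (δ / 2 * s) ^ 2 := by ring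
          _ ≤ _ := mul_le_mul_of_nonneg_left (pow_le_pow_left₀ (by positivity) hgap 2) hη.le

end Lindeberg

/-- Under Lindeberg's condition,
`max_{1≤i≤n} (Z_i − Z̄_n)² / ∑_{i=1}^n (Z_i − Z̄_n)²` converges to 0 in probability. -/
theorem max_centered_square_ratio_negligible
    {Ω : Type*} [MeasurableSpace Ω] (P : Measure Ω) [IsProbabilityMeasure P]
    (Z : ℕ → Ω → ℝ) (σ2 : ℕ → ℝ)
    (hmeas : ∀ i, Measurable (Z i))
    (hindep : iIndepFun Z P)
    (hL2 : ∀ i, MemLp (Z i) 2 P)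
    (hmean : ∀ i, ∫ ω, Z i ω ∂P = 0)
    (hvar : ∀ i, ∫ ω, (Z i ω) ^ 2 ∂P = σ2 i)
    (hpos : ∀ i, 0 < σ2 i)
    (hLind : ∀ ε > (0 : ℝ), Tendsto (fun n =>
      (∑ i ∈ Finset.range n, σ2 i)⁻¹ *
        ∑ i ∈ Finset.range n,
          ∫ ω in {ω | ε * Real.sqrt (∑ j ∈ Finset.range n, σ2 j) ≤ |Z i ω|}, (Z i ω) ^ 2 ∂P)
      atTop (nhds 0)) :
    ∀ ε > (0 : ℝ), Tendsto (fun n =>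
      P {ω | ∃ i ∈ Finset.range n,
        ε ≤ (Z i ω - (∑ j ∈ Finset.range n, Z j ω) / n) ^ 2 /
          ∑ j ∈ Finset.range n, (Z j ω - (∑ l ∈ Finset.range n, Z l ω) / n) ^ 2})
      atTop (nhds 0) := by
  intro ε hε
  set δ := min (ε / 8) (1 / 4)
  have hδ : 0 < δ := by positivity
  have hA := tendsto_measure_exists_le_sq hmeas hL2 hpos hLind hδ
  have hB := tendsto_measure_le_sq_sum_div hindep hL2 hmean hvar hpos hδ
  have hC := tendsto_measure_sum_sq_le hmeas hindep hL2 hvar hpos hLind (δ := 1 / 4) (by norm_num)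
  have hABC := (hA.add hB).add hC
  rw [add_zero, add_zero] at hABC
  refine tendsto_of_tendsto_of_tendsto_of_le_of_le' tendsto_const_nhds hABC
    (.of_forall fun _ => zero_le) ?_
  filter_upwards [eventually_gt_atTop 0] with n hn
  refine (measure_mono ?_).trans <|
    (measure_union_le _ _).trans (add_le_add_left (measure_union_le _ _) _)
  rintro ω ⟨i, hi, hratio⟩
  by_contra hgood
  rw [Set.mem_union, Set.mem_union, not_or, not_or] at hgood
  obtain ⟨⟨hmax, hsum⟩, hsq⟩ := hgood
  have hcard : ((range n).card : ℝ) = n := by rw [card_range]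
  have hsmall := sq_sub_mean_div_lt (sum_range_pos hpos hn) (min_le_right _ _)
    (fun j hj => not_le.1 fun h => hmax ⟨j, hj, h⟩)
    (by rw [hcard]; exact not_le.1 fun h => hsum h) (not_le.1 fun h => hsq h) hi
  rw [hcard] at hsmall
  linarith [min_le_left (ε / 8) (1 / 4)]
end
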